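/- arXiv:2410.14995 — 7 statements merged into one kernel-verified Lean document; each statement's English description precedes it below -/
import Mathlib

section
/- Let w : [0,∞) → [0,∞) be a continuous and non-decreasing function, and let w** denote its greatest convex minorant (the supremum of all convex functions on [0,∞) lying below w). Then for every t ≥ 0 there exists a point a ∈ [0, t] such that w** is affine on the interval [a, t] and w(a) = w**(a). -/
open Set Filter Topology

/-!
Let `ℓ` be a supporting line of `w**` at `t` and `a` the leftmost point of `[0, t]` where `w**`
touches `ℓ`; by convexity `w** = ℓ` on `[a, t]`. Suppose `w** a < w a`. Since the constant `w 0` is a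
convex minorant, `w** 0 = w 0`, so `a > 0`. By continuity, on a small interval `[x, y]` around `a`
the secant of `w**` stays below `w`; outside `[x, y]` it lies below `w**` by convexity. Being an
affine minorant of `w`, the secant lies below `w**` everywhere, so `w**` is affine on `[x, y]`.
This affine piece lies above `ℓ` and touches it at the interior point `a`, so it is `ℓ`, and `w**`
touches `ℓ` at `x < a`: a contradiction.
-/

structure IsGreatestConvexMinorantOn (D : Set ℝ) (w f : ℝ → ℝ) : Prop where
  convexOn : ConvexOn ℝ D f
  le : ∀ s ∈ D, f s ≤ w s
  greatest : ∀ g : ℝ → ℝ, ConvexOn ℝ D g → (∀ s ∈ D, g s ≤ w s) → ∀ s ∈ D, g s ≤ f s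

lemma convexOn_affine {D : Set ℝ} (hD : Convex ℝ D) (c d : ℝ) :
    ConvexOn ℝ D fun s => c * s + d :=
  ((LinearMap.mul ℝ ℝ c).convexOn hD).add_const d

lemma ContinuousOn.exists_isLeast_eq {f g : ℝ → ℝ} {a b : ℝ} (hf : ContinuousOn f (Icc a b))
    (hg : ContinuousOn g (Icc a b)) (hab : a ≤ b) (hb : f b = g b) :
    ∃ c, IsLeast {s ∈ Icc a b | f s = g s} c :=
  (isCompact_Icc.of_isClosed_subset (isClosed_Icc.isClosed_eq hf hg)
    (sep_subset _ _)).exists_isLeast ⟨b, right_mem_Icc.2 hab, hb⟩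

namespace ConvexOn

variable {D : Set ℝ} {f : ℝ → ℝ} {x y s : ℝ}

lemma mul_le_secant (hf : ConvexOn ℝ D f) (hx : x ∈ D) (hy : y ∈ D) (hs : s ∈ Icc x y) :
    (y - x) * f s ≤ (y - s) * f x + (s - x) * f y := by
  rcases eq_endpoints_or_mem_Ioo_of_mem_Icc hs with rfl | rfl | ⟨hxs, hsy⟩
  · linarith
  · linarith
  · exact hf.secant_mono_aux1 hx hy hxs hsy

lemma secant_le_mul_of_notMem_Ioo (hf : ConvexOn ℝ D f) (hx : x ∈ D) (hy : y ∈ D) (hs : s ∈ D)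
    (hxy : x < y) (hsxy : s ∉ Ioo x y) :
    (y - s) * f x + (s - x) * f y ≤ (y - x) * f s := by
  rcases le_or_gt s x with hsx | hxs
  · rcases hsx.eq_or_lt with rfl | hsx
    · linarith
    · linarith [hf.secant_mono_aux1 hs hy hsx hxy]
  · have hys : y ≤ s := not_lt.1 fun hsy => hsxy ⟨hxs, hsy⟩
    rcases hys.eq_or_lt with rfl | hys
    · linarith
    · linarith [hf.secant_mono_aux1 hx hs hxy hys]

lemma exists_affine_le_eq (hf : ConvexOn ℝ D f) {t : ℝ} (ht : t ∈ interior D) :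
    ∃ c d : ℝ, (∀ s ∈ D, c * s + d ≤ f s) ∧ f t = c * t + d := by
  refine ⟨derivWithin f (Iio t) t, f t - derivWithin f (Iio t) t * t, fun s hs => ?_, by ring⟩
  rcases lt_trichotomy s t with hst | rfl | hts
  · have h := hf.slope_le_leftDeriv_of_mem_interior hs ht hst
    rw [slope_def_field, div_le_iff₀ (sub_pos.2 hst)] at h
    linarith
  · linarith
  · have h := (hf.leftDeriv_le_rightDeriv_of_mem_interior ht).trans
      (hf.rightDeriv_le_slope_of_mem_interior ht hs hts)
    rw [slope_def_field, le_div_iff₀ (sub_pos.2 hts)] at h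
    linarith

lemma eqOn_affine_of_le_of_eq (hf : ConvexOn ℝ D f) (hx : x ∈ D) (hy : y ∈ D) {c d : ℝ}
    (hle : ∀ s ∈ Icc x y, c * s + d ≤ f s) (hfx : f x = c * x + d) (hfy : f y = c * y + d) :
    ∀ s ∈ Icc x y, f s = c * s + d := by
  intro s hs
  rcases hs.1.eq_or_lt with rfl | hxs
  · exact hfx
  have h := hf.mul_le_secant hx hy hs
  rw [hfx, hfy] at h
  have hyx : 0 < y - x := hxs.trans_le hs.2 |> sub_pos.2
  exact (hle s hs).antisymm' (le_of_mul_le_mul_left (by linarith) hyx)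

lemma continuousWithinAt_Ici_of_isMinOn {a : ℝ} (hf : ConvexOn ℝ (Ici a) f)
    (hmin : IsMinOn f (Ici a) a) : ContinuousWithinAt f (Ici a) a := by
  have hsecant : ∀ s ∈ Icc a (a + 1), f s ≤ f a + (s - a) * (f (a + 1) - f a) := fun s hs => by
    have := hf.mul_le_secant self_mem_Ici (by simp) hs
    linarith
  have hlim : Tendsto (fun s => f a + (s - a) * (f (a + 1) - f a)) (𝓝[Ici a] a) (𝓝 (f a)) := by
    have : Continuous fun s => f a + (s - a) * (f (a + 1) - f a) := by fun_prop
    simpa using (this.tendsto a).mono_left nhdsWithin_le_nhds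
  refine tendsto_of_tendsto_of_tendsto_of_le_of_le' tendsto_const_nhds hlim
    (eventually_mem_nhdsWithin.mono fun s hs => hmin hs) ?_
  filter_upwards [Icc_mem_nhdsGE (by linarith : a < a + 1)] with s hs using hsecant s hs

end ConvexOn

namespace IsGreatestConvexMinorantOn

variable {D : Set ℝ} {w f : ℝ → ℝ}

lemma eqOn_secant (hf : IsGreatestConvexMinorantOn D w f) {x y : ℝ} (hx : x ∈ D) (hy : y ∈ D)
    (hxy : x < y) (hw : ∀ s ∈ Icc x y, (y - s) * f x + (s - x) * f y ≤ (y - x) * w s) :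
    ∃ c d : ℝ, ∀ s ∈ Icc x y, f s = c * s + d := by
  set c := slope f x y
  set d := f x - c * x
  have hyx : 0 < y - x := sub_pos.2 hxy
  have hsecant : ∀ s, (y - x) * (c * s + d) = (y - s) * f x + (s - x) * f y := fun s => by
    simp only [c, d, slope_def_field]
    field_simp
    ring
  have hle : ∀ s ∈ D, c * s + d ≤ f s := by
    refine hf.greatest _ (convexOn_affine hf.convexOn.1 c d) fun s hs => ?_
    by_cases hsxy : s ∈ Ioo x y
    · refine le_of_mul_le_mul_left ?_ hyx
      rw [hsecant]
      exact hw s (Ioo_subset_Icc_self hsxy)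
    · refine (le_of_mul_le_mul_left ?_ hyx).trans (hf.le s hs)
      rw [hsecant]
      exact hf.convexOn.secant_le_mul_of_notMem_Ioo hx hy hs hxy hsxy
  refine ⟨c, d, hf.convexOn.eqOn_affine_of_le_of_eq hx hy
    (fun s hs => hle s (hf.convexOn.1.ordConnected.out hx hy hs)) ?_ ?_⟩
  · simp [d]
  · nlinarith [hsecant y]

lemma exists_affineOn_nhds (hf : IsGreatestConvexMinorantOn D w f) {a : ℝ} (ha : a ∈ interior D)
    (hw : ContinuousAt w a) (hlt : f a < w a) :
    ∃ x y, x < a ∧ a < y ∧ Icc x y ⊆ D ∧ ∃ c d : ℝ, ∀ s ∈ Icc x y, f s = c * s + d := by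
  obtain ⟨M, hfM, hMw⟩ := exists_between hlt
  have hfa : ContinuousAt f a :=
    hf.convexOn.continuousOn_interior.continuousAt (isOpen_interior.mem_nhds ha)
  have hnear : ∀ᶠ s in 𝓝 a, s ∈ D ∧ f s ≤ M ∧ M ≤ w s :=
    Filter.Eventually.and (mem_interior_iff_mem_nhds.1 ha) <|
      (hfa.eventually (eventually_le_nhds hfM)).and (hw.eventually (eventually_ge_nhds hMw))
  obtain ⟨l, u, ⟨hla, hau⟩, hlu⟩ := mem_nhds_iff_exists_Ioo_subset.1 hnear
  obtain ⟨x, hlx, hxa⟩ := exists_between hla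
  obtain ⟨y, hay, hyu⟩ := exists_between hau
  have hgood : ∀ s ∈ Icc x y, s ∈ D ∧ f s ≤ M ∧ M ≤ w s := fun s hs =>
    hlu ⟨hlx.trans_le hs.1, hs.2.trans_lt hyu⟩
  obtain ⟨hxD, hfx, -⟩ := hgood x (left_mem_Icc.2 (hxa.trans hay).le)
  obtain ⟨hyD, hfy, -⟩ := hgood y (right_mem_Icc.2 (hxa.trans hay).le)
  refine ⟨x, y, hxa, hay, fun s hs => (hgood s hs).1,
    hf.eqOn_secant hxD hyD (hxa.trans hay) fun s hs => ?_⟩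
  nlinarith [hs.1, hs.2, (hgood s hs).2.2]

end IsGreatestConvexMinorantOn

theorem stmt0_general
    (w gcm : ℝ → ℝ)
    (hw_cont : ContinuousOn w (Ici 0))
    (hw_mono : MonotoneOn w (Ici 0))
    (hgcm_conv : ConvexOn ℝ (Ici 0) gcm)
    (hgcm_le : ∀ s ∈ Ici (0:ℝ), gcm s ≤ w s)
    (hgcm_greatest : ∀ g : ℝ → ℝ, ConvexOn ℝ (Ici 0) g →
      (∀ s ∈ Ici (0:ℝ), g s ≤ w s) → ∀ s ∈ Ici (0:ℝ), g s ≤ gcm s) :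
    ∀ t : ℝ, 0 ≤ t → ∃ a ∈ Icc (0:ℝ) t,
      (∃ c d : ℝ, ∀ s ∈ Icc a t, gcm s = c * s + d) ∧ w a = gcm a := by
  have hgcm : IsGreatestConvexMinorantOn (Ici 0) w gcm := ⟨hgcm_conv, hgcm_le, hgcm_greatest⟩
  have hmin : ∀ s ∈ Ici (0:ℝ), w 0 ≤ gcm s := hgcm_greatest _ (convexOn_const _ (convex_Ici 0))
    fun s hs => hw_mono self_mem_Ici hs hs
  have h0 : gcm 0 = w 0 := (hgcm_le 0 self_mem_Ici).antisymm (hmin 0 self_mem_Ici)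
  have hcont : ContinuousOn gcm (Ici 0) := hgcm_conv.continuousOn_Ici <|
    hgcm_conv.continuousWithinAt_Ici_of_isMinOn fun s hs => h0 ▸ hmin s hs
  intro t ht
  rcases ht.eq_or_lt with rfl | ht
  · exact ⟨0, left_mem_Icc.2 le_rfl, ⟨0, gcm 0, fun s hs => by simp [hs.2.antisymm hs.1]⟩,
      h0.symm⟩
  obtain ⟨c, d, hle, hct⟩ := hgcm_conv.exists_affine_le_eq (by simpa using ht)
  obtain ⟨a, ⟨haIcc, hca⟩, hleast⟩ := (hcont.mono Icc_subset_Ici_self).exists_isLeast_eq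
    (g := fun s => c * s + d) (by fun_prop) ht.le hct
  refine ⟨a, haIcc, ⟨c, d, hgcm_conv.eqOn_affine_of_le_of_eq haIcc.1 ht.le
    (fun s hs => hle s (haIcc.1.trans hs.1)) hca hct⟩, ?_⟩
  by_contra hne
  have hlt : gcm a < w a := (hgcm_le a haIcc.1).lt_of_ne' hne
  have ha : 0 < a := haIcc.1.lt_of_ne fun h => by simp [← h, h0] at hlt
  obtain ⟨x, y, hxa, hay, hxyD, c', d', hxy⟩ := hgcm.exists_affineOn_nhds (by simpa using ha)
    (hw_cont.continuousAt (Ici_mem_nhds ha)) hlt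
  have hx : x ∈ Icc x y := left_mem_Icc.2 (hxa.trans hay).le
  have hy : y ∈ Icc x y := right_mem_Icc.2 (hxa.trans hay).le
  have hcx : gcm x = c * x + d := by
    have hlex := hle x (hxyD hx)
    have hley := hle y (hxyD hy)
    rw [hxy x hx] at hlex ⊢
    rw [hxy y hy] at hley
    rw [hxy a ⟨hxa.le, hay.le⟩] at hca
    nlinarith
  exact hxa.not_ge (hleast ⟨⟨hxyD hx, (hxa.trans_le haIcc.2).le⟩, hcx⟩)

/-- Let `w : [0,∞) → [0,∞)` be continuous and non-decreasing, and let
`gcm` be its greatest convex minorant on `[0,∞)` (convex, below `w`, and dominating every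
convex function below `w`). Then for every `t ≥ 0` there exists `a ∈ [0,t]` such that
`gcm` is affine on `[a,t]` and `w a = gcm a`. -/
theorem stmt0
    (w gcm : ℝ → ℝ)
    (hw_cont : ContinuousOn w (Ici 0))
    (hw_mono : MonotoneOn w (Ici 0))
    (hw_nonneg : ∀ s ∈ Ici (0:ℝ), 0 ≤ w s)
    (hgcm_conv : ConvexOn ℝ (Ici 0) gcm)
    (hgcm_le : ∀ s ∈ Ici (0:ℝ), gcm s ≤ w s)
    (hgcm_greatest : ∀ g : ℝ → ℝ, ConvexOn ℝ (Ici 0) g →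
      (∀ s ∈ Ici (0:ℝ), g s ≤ w s) → ∀ s ∈ Ici (0:ℝ), g s ≤ gcm s) :
    ∀ t : ℝ, 0 ≤ t → ∃ a ∈ Icc (0:ℝ) t,
      (∃ c d : ℝ, ∀ s ∈ Icc a t, gcm s = c * s + d) ∧ w a = gcm a :=
  stmt0_general w gcm hw_cont hw_mono hgcm_conv hgcm_le hgcm_greatest
end

section
/- Let B be a nonempty index set and {w_y}_{y ∈ B} a family of non-negative, non-decreasing convex functions on [0,∞), and set w := inf_{y ∈ B} w_y (pointwise infimum). Let w** denote the greatest convex minorant of w. Then for every s ≥ 0, the right derivative of w** at s satisfies D⁺w**(s) ≥ inf_{y ∈ B} D⁺w_y(s). -/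
open Set

lemma aux_convexOn_kink (a b k r : ℝ) (hk : 0 ≤ k) :
    ConvexOn ℝ (Ici (0:ℝ)) (fun t => a + b * (t - r) + k * max (t - r) 0) := by
  refine ⟨convex_Ici 0, fun x _ y _ p q hp hq hpq => ?_⟩
  simp only [smul_eq_mul]
  have key : p * x + q * y - r = p * (x - r) + q * (y - r) := by
    linear_combination r * hpq
  have hmax : max (p * x + q * y - r) 0 ≤ p * max (x - r) 0 + q * max (y - r) 0 := by
    apply max_le
    · rw [key]
      exact add_le_add (mul_le_mul_of_nonneg_left (le_max_left _ _) hp)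
        (mul_le_mul_of_nonneg_left (le_max_left _ _) hq)
    · have h1 : (0:ℝ) ≤ max (x - r) 0 := le_max_right _ _
      have h2 : (0:ℝ) ≤ max (y - r) 0 := le_max_right _ _
      positivity
  have expand : p * (a + b * (x - r) + k * max (x - r) 0)
      + q * (a + b * (y - r) + k * max (y - r) 0)
      = a + b * (p * (x - r) + q * (y - r))
        + k * (p * max (x - r) 0 + q * max (y - r) 0) := by
    linear_combination a * hpq
  rw [key] at hmax
  rw [expand, key]
  have := mul_le_mul_of_nonneg_left hmax hk
  linarith

/-- Let `{w y}` be a family of non-negative, non-decreasing convex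
functions on `[0,∞)`, `W` their pointwise infimum and `gcm` the greatest convex minorant
of `W` on `[0,∞)`. If each `w y` has right derivative `D y` at `s ≥ 0` and `gcm` has right
derivative `Dg` at `s`, then `Dg ≥ ⨅ y, D y` (expressed: every lower bound of the `D y`
is a lower bound of `Dg`). -/
theorem stmt1 {ι : Type*} [Nonempty ι]
    (w : ι → ℝ → ℝ) (W gcm : ℝ → ℝ)
    (hnonneg : ∀ y, ∀ s ∈ Ici (0:ℝ), 0 ≤ w y s)
    (hmono : ∀ y, MonotoneOn (w y) (Ici 0))
    (hconv : ∀ y, ConvexOn ℝ (Ici 0) (w y))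
    (hW : ∀ s, W s = ⨅ y, w y s)
    (hgcm_conv : ConvexOn ℝ (Ici 0) gcm)
    (hgcm_le : ∀ s ∈ Ici (0:ℝ), gcm s ≤ W s)
    (hgcm_greatest : ∀ g : ℝ → ℝ, ConvexOn ℝ (Ici 0) g →
      (∀ s ∈ Ici (0:ℝ), g s ≤ W s) → ∀ s ∈ Ici (0:ℝ), g s ≤ gcm s)
    (s : ℝ) (hs : 0 ≤ s)
    (D : ι → ℝ) (hD : ∀ y, HasDerivWithinAt (w y) (D y) (Ici s) s)
    (Dg : ℝ) (hDg : HasDerivWithinAt gcm Dg (Ici s) s) :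
    ∀ c : ℝ, (∀ y, c ≤ D y) → c ≤ Dg := by
  intro c hc
  by_contra hcon
  push_neg at hcon
  have hsmem : s ∈ Ici (0:ℝ) := hs
  -- the slope limit characterization of Dg
  have hten : Filter.Tendsto (slope gcm s) (nhdsWithin s (Ioi s)) (nhds Dg) := by
    have := hasDerivWithinAt_iff_tendsto_slope.mp hDg
    rwa [Ici_sdiff_left] at this
  -- Step A: for 0 ≤ t < s, gcm s + Dg * (t - s) ≤ gcm t
  have stepA : ∀ t, 0 ≤ t → t < s → gcm s + Dg * (t - s) ≤ gcm t := by
    intro t ht hts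
    have hslope : slope gcm s t ≤ Dg := by
      refine ge_of_tendsto hten ?_
      filter_upwards [self_mem_nhdsWithin] with u (hu : s < u)
      exact hgcm_conv.slope_mono hsmem ⟨ht, hts.ne⟩ ⟨le_trans hs hu.le, hu.ne'⟩
        (hts.le.trans hu.le)
    rw [slope_def_field] at hslope
    have hneg : t - s < 0 := by linarith
    rw [div_le_iff_of_neg hneg] at hslope
    linarith
  -- Step B: for t > s, each w y satisfies w y s + c * (t - s) ≤ w y t
  have stepB : ∀ y, ∀ t, s < t → w y s + c * (t - s) ≤ w y t := by
    intro y t hst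
    have h1 : D y ≤ slope (w y) s t :=
      (hconv y).le_slope_of_hasDerivWithinAt_Ioi hsmem (le_trans hs hst.le) hst
        ((hD y).mono Ioi_subset_Ici_self)
    rw [slope_def_field] at h1
    have hpos : 0 < t - s := by linarith
    have h2 : D y * (t - s) ≤ w y t - w y s := by
      rw [← le_div_iff₀ hpos]; exact h1
    have h3 : c * (t - s) ≤ D y * (t - s) :=
      mul_le_mul_of_nonneg_right (hc y) hpos.le
    linarith
  -- bounded below
  have hbdd : ∀ t : ℝ, 0 ≤ t → BddBelow (Set.range fun y => w y t) := by
    intro t ht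
    exact ⟨0, fun x ⟨y, hy⟩ => hy ▸ hnonneg y t ht⟩
  -- gcm s ≤ w y s for each y
  have hgw : ∀ y, gcm s ≤ w y s := by
    intro y
    refine le_trans (hgcm_le s hsmem) ?_
    rw [hW s]
    exact ciInf_le (hbdd s hs) y
  -- the kinked minorant
  set m : ℝ → ℝ := fun t => gcm s + Dg * (t - s) + (c - Dg) * max (t - s) 0 with hm
  have hmconv : ConvexOn ℝ (Ici (0:ℝ)) m :=
    aux_convexOn_kink (gcm s) Dg (c - Dg) s (by linarith)
  have hmleW : ∀ t ∈ Ici (0:ℝ), m t ≤ W t := by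
    intro t ht
    rcases le_or_gt t s with hts | hst
    · have hmax : max (t - s) 0 = 0 := max_eq_right (by linarith)
      have hle : m t ≤ gcm t := by
        rcases eq_or_lt_of_le hts with rfl | hlt
        · simp [hm, hmax]
        · have := stepA t ht hlt
          simp only [hm, hmax, mul_zero, add_zero]
          linarith
      exact hle.trans (hgcm_le t ht)
    · have hmax : max (t - s) 0 = t - s := max_eq_left (by linarith)
      have hmt : m t = gcm s + c * (t - s) := by simp only [hm, hmax]; ring
      rw [hmt, hW t]
      refine le_ciInf fun y => ?_
      have := stepB y t hst
      have := hgw y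
      linarith
  -- the max of gcm and m is a convex minorant, hence ≤ gcm
  have hmax_le : ∀ t ∈ Ici (0:ℝ), max (gcm t) (m t) ≤ gcm t := by
    refine hgcm_greatest _ (hgcm_conv.sup hmconv) ?_
    intro t ht
    exact max_le (hgcm_le t ht) (hmleW t ht)
  have hmle : ∀ t ∈ Ici (0:ℝ), m t ≤ gcm t := fun t ht =>
    le_trans (le_max_right _ _) (hmax_le t ht)
  -- conclude: slope of gcm on the right of s is ≥ c, so Dg ≥ c
  have hfinal : c ≤ Dg := by
    refine ge_of_tendsto hten ?_
    filter_upwards [self_mem_nhdsWithin] with u (hu : s < u)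
    have hmu := hmle u (le_trans hs hu.le)
    have hmax : max (u - s) 0 = u - s := max_eq_left (by linarith)
    have hmu' : gcm s + c * (u - s) ≤ gcm u := by
      have : m u = gcm s + c * (u - s) := by simp only [hm, hmax]; ring
      linarith [this ▸ hmu]
    rw [slope_def_field]
    rw [le_div_iff₀ (by linarith : (0:ℝ) < u - s)]
    linarith
  exact absurd hfinal (not_le.mpr hcon)
end

section
/- Let U ⊂ ℝ^N be a bounded open set and w : U × ℝ → ℝ a bounded function that is non-increasing and left-continuous in its second variable, and such that for every s ∈ (0,1) there exists M_s > 0 with sup_{x∈U} w(x,t) < s < inf_{x∈U} w(x,−t) for all t ≥ M_s. Suppose there is a constant C > 0 such that w(x, t + C|x−y|) ≤ w(y, t) for all x, y ∈ U and t ∈ ℝ. Then for every s ∈ (0,1), the generalized inverse u(x) := inf{t ∈ ℝ : w(x,t) ≤ s} is a real-valued Lipschitz function on U with Lipschitz constant at most C. -/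
open Set

/-- Let `U ⊂ ℝ^N` be bounded open and `w : U × ℝ → ℝ` bounded,
non-increasing and left-continuous in the second variable, satisfying the growth
condition with constants `M s`, and the cone condition
`w x (t + C·|x−y|) ≤ w y t`. Then for every `s ∈ (0,1)` the generalized inverse
`x ↦ inf{t | w x t ≤ s}` is real-valued (bounded by `M s`) and Lipschitz on `U`
with constant at most `C`. -/
theorem stmt5 {N : ℕ} (U : Set (EuclideanSpace ℝ (Fin N)))
    (hUo : IsOpen U) (hUb : Bornology.IsBounded U)
    (w : EuclideanSpace ℝ (Fin N) → ℝ → ℝ)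
    (hbdd : ∃ K : ℝ, ∀ x t, |w x t| ≤ K)
    (hanti : ∀ x, Antitone (w x))
    (hleft : ∀ x t, ContinuousWithinAt (w x) (Iic t) t)
    (M : ℝ → ℝ)
    (hM : ∀ s ∈ Ioo (0:ℝ) 1, 0 < M s ∧ ∀ t, M s ≤ t →
      (∀ x ∈ U, w x t < s) ∧ (∀ x ∈ U, s < w x (-t)))
    (C : ℝ) (hC : 0 < C)
    (hcone : ∀ x ∈ U, ∀ y ∈ U, ∀ t : ℝ, w x (t + C * dist x y) ≤ w y t) :
    ∀ s ∈ Ioo (0:ℝ) 1,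
      (∀ x ∈ U, |sInf {t : ℝ | w x t ≤ s}| ≤ M s) ∧
      LipschitzOnWith (Real.toNNReal C) (fun x => sInf {t : ℝ | w x t ≤ s}) U := by
  intro s hs
  obtain ⟨hMs, hMt⟩ := hM s hs
  have hmem : ∀ x ∈ U, M s ∈ {t : ℝ | w x t ≤ s} := fun x hx =>
    le_of_lt ((hMt (M s) le_rfl).1 x hx)
  have hlb : ∀ x ∈ U, ∀ t ∈ {t : ℝ | w x t ≤ s}, -(M s) ≤ t := by
    intro x hx t ht
    by_contra h
    push_neg at h
    have h1 : s < w x (-(M s)) := (hMt (M s) le_rfl).2 x hx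
    have h2 : w x (-(M s)) ≤ w x t := hanti x h.le
    have h3 : w x t ≤ s := ht
    linarith
  have hbdd' : ∀ x ∈ U, BddBelow {t : ℝ | w x t ≤ s} := fun x hx =>
    ⟨-(M s), fun t ht => hlb x hx t ht⟩
  have hne : ∀ x ∈ U, ({t : ℝ | w x t ≤ s}).Nonempty := fun x hx => ⟨M s, hmem x hx⟩
  have key : ∀ x ∈ U, ∀ y ∈ U,
      sInf {t : ℝ | w x t ≤ s} ≤ sInf {t : ℝ | w y t ≤ s} + C * dist x y := by
    intro x hx y hy
    have h1 : ∀ t ∈ {t : ℝ | w y t ≤ s}, sInf {t : ℝ | w x t ≤ s} ≤ t + C * dist x y := by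
      intro t ht
      exact csInf_le (hbdd' x hx) (le_trans (hcone x hx y hy t) ht)
    have h2 : sInf {t : ℝ | w x t ≤ s} - C * dist x y ≤ sInf {t : ℝ | w y t ≤ s} :=
      le_csInf (hne y hy) (fun t ht => by linarith [h1 t ht])
    linarith
  constructor
  · intro x hx
    rw [abs_le]
    exact ⟨le_csInf (hne x hx) (fun t ht => hlb x hx t ht),
      csInf_le (hbdd' x hx) (hmem x hx)⟩
  · rw [lipschitzOnWith_iff_dist_le_mul]
    intro x hx y hy
    rw [Real.dist_eq, Real.coe_toNNReal C hC.le, abs_le]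
    have k1 := key x hx y hy
    have k2 := key y hy x hx
    rw [dist_comm y x] at k2
    constructor <;> linarith
end

section
/- Let u : ℝ^N → ℝ be measurable with |u(x)| ≤ M for all x, let ρ : ℝ^N → [0,∞) be a smooth compactly supported kernel with ∫ρ = 1, set ρ_ε(y) = ε^{−N}ρ(y/ε), and define v_ε(x,t) := ∫_{ℝ^N} 1_{\{u(x−y) ≥ t\}} ρ_ε(y) dy. Let α : ℝ → (0,∞) be absolutely continuous with α'(t) ≤ −c < 0 for a.e. t ∈ (−M, M), and set v_{ε,δ}(x,t) := v_ε(x,t) + δα(t) for δ > 0. Then with C̄ := ‖∇ρ‖_{L¹}/(δc), for every x, y and every t ∈ ℝ, v_{ε,δ}(x, t + (C̄/ε)|x−y|) ≤ v_{ε,δ}(y, t). -/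
open MeasureTheory Set

/-- The rescaled mollifier `ρ_ε(y) = ε^{-N} ρ(y/ε)`. -/
noncomputable def rhoEps {N : ℕ} (ρ : EuclideanSpace ℝ (Fin N) → ℝ) (ε : ℝ)
    (y : EuclideanSpace ℝ (Fin N)) : ℝ :=
  (ε ^ N)⁻¹ * ρ (ε⁻¹ • y)

/-- `v_ε(x,t) = ∫ 1_{u(x−y) ≥ t} ρ_ε(y) dy`. -/
noncomputable def vEps {N : ℕ} (u ρ : EuclideanSpace ℝ (Fin N) → ℝ) (ε : ℝ)
    (x : EuclideanSpace ℝ (Fin N)) (t : ℝ) : ℝ :=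
  ∫ y, if t ≤ u (x - y) then rhoEps ρ ε y else 0

/-- `v_{ε,δ}(x,t) = v_ε(x,t) + δ α(t)`. -/
noncomputable def vEpsDelta {N : ℕ} (u ρ : EuclideanSpace ℝ (Fin N) → ℝ) (ε δ : ℝ)
    (α : ℝ → ℝ) (x : EuclideanSpace ℝ (Fin N)) (t : ℝ) : ℝ :=
  vEps u ρ ε x t + δ * α t

open Function

variable {N : ℕ}

local notation "E" => EuclideanSpace ℝ (Fin N)

set_option maxHeartbeats 1000000 in
/-- L¹ bound for translation -/
lemma l1_translate_bound (f : E → ℝ) (hf : ContDiff ℝ (⊤ : ℕ∞) f)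
    (hsupp : HasCompactSupport f) (a : E) :
    ∫ z : E, |f (z + a) - f z| ≤ ‖a‖ * ∫ z : E, ‖fderiv ℝ f z‖ := by
  set f' := fderiv ℝ f with hf'
  have hf'c : Continuous f' := hf.continuous_fderiv (by simp)
  have hf's : HasCompactSupport f' := hsupp.fderiv (𝕜 := ℝ)
  set ν : Measure ℝ := volume.restrict (Ioc (0:ℝ) 1) with hν
  set F : E → ℝ → ℝ := fun z s => ‖f' (z + s • a)‖ with hF
  -- pointwise FTC bound
  have step1 : ∀ z : E, |f (z + a) - f z| ≤ (∫ s in (0:ℝ)..1, F z s) * ‖a‖ := by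
    intro z
    have hderiv : ∀ s ∈ Set.uIcc (0:ℝ) 1, HasDerivAt (fun s : ℝ => f (z + s • a))
        ((f' (z + s • a)) a) s := by
      intro s _
      have h1 : HasDerivAt (fun s : ℝ => z + s • a) a s := by
        simpa using ((hasDerivAt_id s).smul_const a).const_add z
      exact ((hf.differentiable (by simp)).differentiableAt.hasFDerivAt).comp_hasDerivAt s h1
    have hpath : Continuous fun s : ℝ => z + s • a :=
      continuous_const.add (continuous_id.smul continuous_const)
    have hcont : Continuous fun s : ℝ => (f' (z + s • a)) a :=
      (hf'c.comp hpath).clm_apply continuous_const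
    have heq : f (z + a) - f z = ∫ s in (0:ℝ)..1, (f' (z + s • a)) a := by
      have := intervalIntegral.integral_eq_sub_of_hasDerivAt hderiv
        (hcont.intervalIntegrable 0 1)
      simp only [one_smul, zero_smul, add_zero] at this
      rw [this]
    rw [heq]
    calc |∫ s in (0:ℝ)..1, (f' (z + s • a)) a|
        = ‖∫ s in (0:ℝ)..1, (f' (z + s • a)) a‖ := (Real.norm_eq_abs _).symm
      _ ≤ ∫ s in (0:ℝ)..1, ‖(f' (z + s • a)) a‖ :=
          intervalIntegral.norm_integral_le_integral_norm zero_le_one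
      _ ≤ ∫ s in (0:ℝ)..1, F z s * ‖a‖ := by
          apply intervalIntegral.integral_mono_on zero_le_one
          · exact (hcont.norm).intervalIntegrable 0 1
          · exact (((hf'c.comp hpath).norm).mul continuous_const).intervalIntegrable 0 1
          · intro s _
            exact ContinuousLinearMap.le_opNorm _ _
      _ = (∫ s in (0:ℝ)..1, F z s) * ‖a‖ := intervalIntegral.integral_mul_const _ _
  -- integrability of uncurry F on product
  obtain ⟨C, hC⟩ := hf's.exists_bound_of_continuous hf'c
  set K₂ : Set E := (fun p : E × ℝ => p.1 - p.2 • a) '' (tsupport f' ×ˢ Icc 0 1) with hK₂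
  have hK₂c : IsCompact K₂ :=
    ((hf's.isCompact.prod isCompact_Icc).image
      (continuous_fst.sub (continuous_snd.smul continuous_const)))
  have hGcont : Continuous (uncurry F) :=
    (hf'c.comp (continuous_fst.add (continuous_snd.smul continuous_const))).norm
  have hint : Integrable (uncurry F) (volume.prod ν) := by
    have hbd : Integrable (fun p : E × ℝ => K₂.indicator (fun _ => C) p.1) (volume.prod ν) := by
      rw [integrable_prod_iff]
      · constructor
        · refine Filter.Eventually.of_forall fun z => ?_
          simpa using integrable_const (μ := ν) (K₂.indicator (fun _ => C) z)
        · simp only [norm_indicator_eq_indicator_norm]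
          have h1 : Integrable (fun z : E => K₂.indicator (fun _ => ‖C‖) z) := by
            rw [integrable_indicator_iff hK₂c.measurableSet]
            exact integrableOn_const hK₂c.measure_lt_top.ne
          have : ∀ z : E, ∫ s, K₂.indicator (fun _ => ‖C‖) z ∂ν
              = (ν univ).toReal • K₂.indicator (fun _ => ‖C‖) z := fun z => integral_const _
          simpa only [this, smul_eq_mul] using h1.const_mul _
      · exact ((measurable_const.indicator hK₂c.measurableSet).comp measurable_fst).aestronglyMeasurable
    apply Integrable.mono' hbd hGcont.aestronglyMeasurable
    have hs : ∀ᵐ p : E × ℝ ∂(volume.prod ν), p.2 ∈ Ioc (0:ℝ) 1 := by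
      rw [ae_iff]
      have : {p : E × ℝ | ¬ p.2 ∈ Ioc (0:ℝ) 1} = (univ : Set E) ×ˢ (Ioc (0:ℝ) 1)ᶜ := by
        ext p; simp
      rw [this, Measure.prod_prod]
      simp [hν, Measure.restrict_apply]
    filter_upwards [hs] with p hp
    by_cases hz : p.1 ∈ K₂
    · rw [indicator_of_mem hz]
      exact (norm_norm _).le.trans (hC _)
    · rw [indicator_of_notMem hz]
      have : p.1 + p.2 • a ∉ tsupport f' := by
        intro hmem
        exact hz ⟨(p.1 + p.2 • a, p.2), ⟨hmem, le_of_lt hp.1, hp.2⟩, by simp⟩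
      simp [uncurry, F, image_eq_zero_of_notMem_tsupport this]
  -- Fubini
  have hswap : (∫ z : E, ∫ s, F z s ∂ν) = ∫ s, (∫ z : E, F z s) ∂ν :=
    integral_integral_swap hint
  have htrans : ∀ s : ℝ, (∫ z : E, F z s) = ∫ z : E, ‖f' z‖ := fun s =>
    integral_add_right_eq_self (fun z : E => ‖f' z‖) (s • a)
  have hνuniv : (ν univ).toReal = 1 := by
    simp [hν, Measure.restrict_apply]
  have hrhs : (∫ s, (∫ z : E, F z s) ∂ν) = ∫ z : E, ‖f' z‖ := by
    simp only [htrans]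
    rw [integral_const, show ν.real univ = (ν univ).toReal from rfl, hνuniv, one_smul]
  -- integrabilities for the final monotone step
  have hfa : Continuous fun z : E => f (z + a) :=
    hf.continuous.comp (continuous_id.add continuous_const)
  have hfa_supp : HasCompactSupport fun z : E => f (z + a) := by
    have := hsupp.comp_homeomorph (Homeomorph.addRight a)
    exact this
  have hlhs_int : Integrable (fun z : E => |f (z + a) - f z|) := by
    apply Continuous.integrable_of_hasCompactSupport
    · exact (hfa.sub hf.continuous).abs
    · exact hfa_supp.comp₂_left (m := fun x y : ℝ => |x - y|) hsupp (by norm_num)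
  have hrhs_int : Integrable (fun z : E => (∫ s, F z s ∂ν) * ‖a‖) := by
    have h1 := hint.integral_prod_left
    exact h1.mul_const _
  calc ∫ z : E, |f (z + a) - f z|
      ≤ ∫ z : E, (∫ s, F z s ∂ν) * ‖a‖ := by
        apply integral_mono hlhs_int hrhs_int
        intro z
        have := step1 z
        rwa [intervalIntegral.integral_of_le zero_le_one] at this
    _ = (∫ z : E, ∫ s, F z s ∂ν) * ‖a‖ := integral_mul_const _ _
    _ = (∫ z : E, ‖f' z‖) * ‖a‖ := by rw [hswap, hrhs]
    _ = ‖a‖ * ∫ z : E, ‖fderiv ℝ f z‖ := by rw [mul_comm, hf']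

section vEpsProps

variable {N' : ℕ} {u ρ : EuclideanSpace ℝ (Fin N') → ℝ} {ε : ℝ}

lemma rhoEps_nonneg (hε : 0 < ε) (hρ_nonneg : ∀ y, 0 ≤ ρ y) (y : EuclideanSpace ℝ (Fin N')) : 0 ≤ rhoEps ρ ε y :=
  mul_nonneg (inv_nonneg.2 (pow_nonneg hε.le _)) (hρ_nonneg _)

lemma rhoEps_continuous (hρc : Continuous ρ) : Continuous (rhoEps ρ ε) :=
  continuous_const.mul (hρc.comp (continuous_id.const_smul ε⁻¹))

lemma rhoEps_integrable (hε : 0 < ε) (hρc : Continuous ρ) (hρ_supp : HasCompactSupport ρ) :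
    Integrable (rhoEps ρ ε) := by
  have h1 : Integrable ρ := hρc.integrable_of_hasCompactSupport hρ_supp
  have h2 : Integrable (fun y : EuclideanSpace ℝ (Fin N') => ρ (ε⁻¹ • y)) :=
    h1.comp_smul (inv_ne_zero hε.ne')
  exact h2.const_mul _

lemma rhoEps_integral (hε : 0 < ε) (hρ_int : ∫ y, ρ y = 1) : ∫ y, rhoEps ρ ε y = 1 := by
  unfold rhoEps
  rw [MeasureTheory.integral_const_mul, Measure.integral_comp_inv_smul volume ρ ε, hρ_int,
    finrank_euclideanSpace_fin, smul_eq_mul, mul_one, abs_of_nonneg (pow_nonneg hε.le _)]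
  exact inv_mul_cancel₀ (pow_ne_zero _ hε.ne')

lemma vEps_integrand_integrable (hε : 0 < ε) (hρc : Continuous ρ)
    (hρ_supp : HasCompactSupport ρ) (hρ_nonneg : ∀ y, 0 ≤ ρ y) (hu : Measurable u)
    (x : EuclideanSpace ℝ (Fin N')) (t : ℝ) :
    Integrable (fun w : EuclideanSpace ℝ (Fin N') => if t ≤ u (x - w) then rhoEps ρ ε w else 0) := by
  apply Integrable.mono' (rhoEps_integrable hε hρc hρ_supp)
  · apply Measurable.aestronglyMeasurable
    exact Measurable.ite
      (measurableSet_le measurable_const (hu.comp (measurable_const.sub measurable_id)))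
      (rhoEps_continuous hρc).measurable measurable_const
  · refine Filter.Eventually.of_forall fun w => ?_
    by_cases h : t ≤ u (x - w) <;>
      simp [h, abs_of_nonneg (rhoEps_nonneg hε hρ_nonneg w), rhoEps_nonneg hε hρ_nonneg w]

lemma vEps_nonneg (hε : 0 < ε) (hρ_nonneg : ∀ y, 0 ≤ ρ y) (x : EuclideanSpace ℝ (Fin N')) (t : ℝ) :
    0 ≤ vEps u ρ ε x t := by
  apply integral_nonneg
  intro w
  by_cases h : t ≤ u (x - w) <;> simp [h, rhoEps_nonneg hε hρ_nonneg w]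

lemma vEps_le_one (hε : 0 < ε) (hρc : Continuous ρ) (hρ_supp : HasCompactSupport ρ)
    (hρ_nonneg : ∀ y, 0 ≤ ρ y) (hu : Measurable u) (hρ_int : ∫ y, ρ y = 1) (x : EuclideanSpace ℝ (Fin N')) (t : ℝ) :
    vEps u ρ ε x t ≤ 1 := by
  rw [← rhoEps_integral hε hρ_int]
  apply integral_mono (vEps_integrand_integrable hε hρc hρ_supp hρ_nonneg hu x t)
    (rhoEps_integrable hε hρc hρ_supp)
  intro w
  by_cases h : t ≤ u (x - w) <;> simp [h, rhoEps_nonneg hε hρ_nonneg w]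

lemma vEps_antitone (hε : 0 < ε) (hρc : Continuous ρ) (hρ_supp : HasCompactSupport ρ)
    (hρ_nonneg : ∀ y, 0 ≤ ρ y) (hu : Measurable u) (x : EuclideanSpace ℝ (Fin N')) {t t' : ℝ} (ht : t ≤ t') :
    vEps u ρ ε x t' ≤ vEps u ρ ε x t := by
  apply integral_mono (vEps_integrand_integrable hε hρc hρ_supp hρ_nonneg hu x t')
    (vEps_integrand_integrable hε hρc hρ_supp hρ_nonneg hu x t)
  intro w
  by_cases h : t' ≤ u (x - w)
  · simp [h, ht.trans h]
  · by_cases h2 : t ≤ u (x - w) <;> simp [h, h2, rhoEps_nonneg hε hρ_nonneg w]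

lemma vEps_eq_zero {M : ℝ} (hM : ∀ x, |u x| ≤ M) (x : EuclideanSpace ℝ (Fin N')) {t : ℝ} (ht : M < t) :
    vEps u ρ ε x t = 0 := by
  unfold vEps
  have h : ∀ w : EuclideanSpace ℝ (Fin N'), (if t ≤ u (x - w) then rhoEps ρ ε w else 0) = 0 := by
    intro w
    have : ¬ t ≤ u (x - w) := not_le.2 (lt_of_le_of_lt ((abs_le.1 (hM _)).2) ht)
    simp [this]
  simp only [h, integral_zero]

lemma vEps_eq_one (hε : 0 < ε) {M : ℝ} (hM : ∀ x, |u x| ≤ M) (hρ_int : ∫ y, ρ y = 1) (x : EuclideanSpace ℝ (Fin N'))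
    {t : ℝ} (ht : t < -M) : vEps u ρ ε x t = 1 := by
  unfold vEps
  have h : ∀ w : EuclideanSpace ℝ (Fin N'), (if t ≤ u (x - w) then rhoEps ρ ε w else 0) = rhoEps ρ ε w := by
    intro w
    have : t ≤ u (x - w) := le_of_lt (lt_of_lt_of_le ht ((abs_le.1 (hM _)).1))
    simp [this]
  rw [integral_congr_ae (Filter.Eventually.of_forall h)]
  exact rhoEps_integral hε hρ_int

end vEpsProps

set_option maxHeartbeats 1000000 in
lemma vEps_lipschitz {N : ℕ} {u ρ : EuclideanSpace ℝ (Fin N) → ℝ} {ε : ℝ}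
    (hε : 0 < ε) (hρ_smooth : ContDiff ℝ (⊤ : ℕ∞) ρ) (hρ_supp : HasCompactSupport ρ)
    (hρ_nonneg : ∀ y, 0 ≤ ρ y) (hu : Measurable u)
    (x y : EuclideanSpace ℝ (Fin N)) (t : ℝ) :
    vEps u ρ ε x t ≤ vEps u ρ ε y t + (∫ z, ‖fderiv ℝ ρ z‖) / ε * dist x y := by
  have hρc : Continuous ρ := hρ_smooth.continuous
  set a : EuclideanSpace ℝ (Fin N) := x - y with ha
  set χ : EuclideanSpace ℝ (Fin N) → ℝ := fun z => if t ≤ u (y - z) then (1:ℝ) else 0 with hχ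
  have hχ01 : ∀ z, χ z = 0 ∨ χ z = 1 := by
    intro z; by_cases h : t ≤ u (y - z) <;> simp [hχ, h]
  -- translated mollifier integrable
  have hta : Integrable (fun z => rhoEps ρ ε (z + a)) :=
    (rhoEps_integrable hε hρc hρ_supp).comp_add_right a
  have hmeasχ : Measurable χ :=
    Measurable.ite (measurableSet_le measurable_const
      (hu.comp (measurable_const.sub measurable_id))) measurable_const measurable_const
  have hint1 : Integrable (fun z => χ z * rhoEps ρ ε (z + a)) := by
    apply Integrable.mono' hta
      (hmeasχ.mul ((rhoEps_continuous hρc).measurable.comp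
        (measurable_id.add_const a))).aestronglyMeasurable
    refine Filter.Eventually.of_forall fun z => ?_
    rcases hχ01 z with h | h <;>
      simp [h, abs_of_nonneg (rhoEps_nonneg hε hρ_nonneg (z + a)),
        rhoEps_nonneg hε hρ_nonneg (z + a)]
  have hint2 : Integrable (fun z => χ z * rhoEps ρ ε z) := by
    apply Integrable.mono' (rhoEps_integrable hε hρc hρ_supp)
      (hmeasχ.mul (rhoEps_continuous hρc).measurable).aestronglyMeasurable
    refine Filter.Eventually.of_forall fun z => ?_
    rcases hχ01 z with h | h <;>
      simp [h, abs_of_nonneg (rhoEps_nonneg hε hρ_nonneg z), rhoEps_nonneg hε hρ_nonneg z]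
  -- rewrite vEps x t via translation
  have hx : vEps u ρ ε x t = ∫ z, χ z * rhoEps ρ ε (z + a) := by
    unfold vEps
    rw [← integral_add_right_eq_self (μ := volume)
      (fun w => if t ≤ u (x - w) then rhoEps ρ ε w else 0) a]
    congr 1
    ext z
    have hxy : x - (z + a) = y - z := by rw [ha]; abel
    rw [hxy, hχ]
    by_cases h : t ≤ u (y - z) <;> simp [h]
  have hy : vEps u ρ ε y t = ∫ z, χ z * rhoEps ρ ε z := by
    unfold vEps
    congr 1
    ext z
    rw [hχ]
    by_cases h : t ≤ u (y - z) <;> simp [h]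
  -- the L¹ translation estimate for rhoEps
  have hd_int : Integrable (fun z => |rhoEps ρ ε (z + a) - rhoEps ρ ε z|) :=
    (hta.sub (rhoEps_integrable hε hρc hρ_supp)).abs
  have hkey : ∫ z, |rhoEps ρ ε (z + a) - rhoEps ρ ε z|
      ≤ (∫ z, ‖fderiv ℝ ρ z‖) / ε * ‖a‖ := by
    set g : EuclideanSpace ℝ (Fin N) → ℝ := fun w => |ρ (w + ε⁻¹ • a) - ρ w| with hg
    have hpt : ∀ z, |rhoEps ρ ε (z + a) - rhoEps ρ ε z| = (ε ^ N)⁻¹ * g (ε⁻¹ • z) := by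
      intro z
      unfold rhoEps
      rw [hg, smul_add, ← mul_sub, abs_mul, abs_of_nonneg (inv_nonneg.2 (pow_nonneg hε.le _))]
    calc ∫ z, |rhoEps ρ ε (z + a) - rhoEps ρ ε z|
        = ∫ z, (ε ^ N)⁻¹ * g (ε⁻¹ • z) := by simp_rw [hpt]
      _ = (ε ^ N)⁻¹ * ∫ z, g (ε⁻¹ • z) := MeasureTheory.integral_const_mul _ _
      _ = (ε ^ N)⁻¹ * ((ε ^ N) * ∫ w, g w) := by
          rw [Measure.integral_comp_inv_smul volume g ε, finrank_euclideanSpace_fin,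
            smul_eq_mul, abs_of_nonneg (pow_nonneg hε.le _)]
      _ = ∫ w, g w := by
          rw [← mul_assoc, inv_mul_cancel₀ (pow_ne_zero _ hε.ne'), one_mul]
      _ ≤ ‖ε⁻¹ • a‖ * ∫ z, ‖fderiv ℝ ρ z‖ := l1_translate_bound ρ hρ_smooth hρ_supp (ε⁻¹ • a)
      _ = (∫ z, ‖fderiv ℝ ρ z‖) / ε * ‖a‖ := by
          rw [norm_smul, norm_inv, Real.norm_eq_abs, abs_of_pos hε]
          ring
  -- assemble
  have hdiff : vEps u ρ ε x t - vEps u ρ ε y t ≤ (∫ z, ‖fderiv ℝ ρ z‖) / ε * ‖a‖ := by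
    rw [hx, hy, ← integral_sub hint1 hint2]
    refine le_trans (integral_mono (hint1.sub hint2) hd_int ?_) hkey
    intro z
    rcases hχ01 z with h | h
    · simp [h, abs_nonneg]
    · simp only [h, one_mul, ← mul_sub]
      exact le_abs_self _
  have : ‖a‖ = dist x y := (dist_eq_norm x y).symm
  linarith [hdiff, this ▸ hdiff]

/-- With `|u| ≤ M`, a smooth compactly supported probability kernel `ρ`,
and `α` positive, non-increasing, with decay rate `−c` on `[−M,M]`, the mollified
functions satisfy the cone condition
`v_{ε,δ}(x, t + (C̄/ε)|x−y|) ≤ v_{ε,δ}(y,t)` where `C̄ = ‖∇ρ‖_{L¹}/(δc)`. -/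
theorem stmt6 {N : ℕ}
    (u : EuclideanSpace ℝ (Fin N) → ℝ) (hu : Measurable u)
    (M : ℝ) (hM : ∀ x, |u x| ≤ M)
    (ρ : EuclideanSpace ℝ (Fin N) → ℝ)
    (hρ_smooth : ContDiff ℝ (⊤ : ℕ∞) ρ) (hρ_supp : HasCompactSupport ρ)
    (hρ_nonneg : ∀ y, 0 ≤ ρ y) (hρ_int : ∫ y, ρ y = 1)
    (ε δ c : ℝ) (hε : 0 < ε) (hδ : 0 < δ) (hc : 0 < c)
    (α : ℝ → ℝ) (hα_pos : ∀ t, 0 < α t) (hα_anti : Antitone α)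
    (hα_decay : ∀ t₁ t₂ : ℝ, -M ≤ t₁ → t₁ ≤ t₂ → t₂ ≤ M →
      α t₂ - α t₁ ≤ -c * (t₂ - t₁))
    (Cbar : ℝ) (hCbar : Cbar = (∫ z, ‖fderiv ℝ ρ z‖) / (δ * c)) :
    ∀ (x y : EuclideanSpace ℝ (Fin N)) (t : ℝ),
      vEpsDelta u ρ ε δ α x (t + Cbar / ε * dist x y) ≤ vEpsDelta u ρ ε δ α y t := by
  intro x y t
  have hρc : Continuous ρ := hρ_smooth.continuous
  set I : ℝ := ∫ z, ‖fderiv ℝ ρ z‖ with hI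
  have hI0 : 0 ≤ I := integral_nonneg fun z => norm_nonneg _
  set d : ℝ := dist x y with hd
  have hd0 : 0 ≤ d := dist_nonneg
  have hCbar0 : 0 ≤ Cbar := by
    rw [hCbar]
    exact div_nonneg hI0 (mul_nonneg hδ.le hc.le)
  set h : ℝ := Cbar / ε * d with hh
  have hh0 : 0 ≤ h := mul_nonneg (div_nonneg hCbar0 hε.le) hd0
  set s : ℝ := t + h with hs
  have hts : t ≤ s := le_add_of_nonneg_right hh0
  have hαs : α s ≤ α t := hα_anti hts
  have hδα : δ * α s ≤ δ * α t := mul_le_mul_of_nonneg_left hαs hδ.le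
  unfold vEpsDelta
  rcases lt_or_ge M s with hMs | hsM
  · -- s > M : vEps x s = 0
    rw [vEps_eq_zero hM x hMs]
    have := vEps_nonneg (u := u) (ρ := ρ) hε hρ_nonneg y t
    linarith
  rcases lt_or_ge t (-M) with htM | hMt
  · -- t < -M : vEps y t = 1
    rw [vEps_eq_one hε hM hρ_int y htM]
    have := vEps_le_one hε hρc hρ_supp hρ_nonneg hu hρ_int x s
    linarith
  · -- main case: -M ≤ t ≤ s ≤ M
    have hdecay := hα_decay t s hMt hts hsM
    have hsub : s - t = h := by rw [hs]; ring
    have hδch : δ * (α s - α t) ≤ - (I / ε * d) := by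
      have h1 : δ * (α s - α t) ≤ δ * (-c * (s - t)) :=
        mul_le_mul_of_nonneg_left hdecay hδ.le
      have h2 : δ * (-c * (s - t)) = - (δ * c * h) := by rw [hsub]; ring
      have h3 : δ * c * h = I / ε * d := by
        rw [hh, hCbar]
        field_simp
      linarith
    have hlip : vEps u ρ ε x t ≤ vEps u ρ ε y t + I / ε * d :=
      vEps_lipschitz hε hρ_smooth hρ_supp hρ_nonneg hu x y t
    have hanti : vEps u ρ ε x s ≤ vEps u ρ ε x t :=
      vEps_antitone hε hρc hρ_supp hρ_nonneg hu x hts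
    linarith
end

section
/- Let ψ : [0,∞) → [0,∞) be increasing convex with ψ ∈ Δ₂ (i.e. ψ(2s) ≤ C_ψ(ψ(s)+1) for all s), let υ : ℝ^N → ℝ^N be γ-Hölder continuous with constant C_υ for some γ ∈ (0,1], and define f(x,ξ) := ψ(|⟨υ(x), ξ⟩|) + |ξ|^{N/γ} on B(0,2) × ℝ^N. Then for every L > 0 there exists C_L > 0 such that for all x, y with |x−y| < ε and all ξ with min over nearby points of f bounded: if |ξ| ≤ L^{γ/N}ε^{−γ}, then f(x,ξ) ≤ C_L(f(y,ξ) + 1), with C_L = C_ψ(1 + max_{s ≤ C_υ L^{γ/N}} ψ(s)). -/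
/-!
Write `⟨υ x, ξ⟩ = ⟨υ y, ξ⟩ + ⟨υ x - υ y, ξ⟩`. By Hölder continuity the second term is at most
`C_υ ε^γ · L^{γ/N} ε^{-γ} = C_υ L^{γ/N}`, independently of `ε`, and the `Δ₂` condition makes `ψ`
quasi-subadditive, so `ψ` of the sum is bounded by `ψ |⟨υ y, ξ⟩|` and `ψ (C_υ L^{γ/N})`.
-/

open Set

section Doubling

variable {ψ : ℝ → ℝ} {C : ℝ}

theorem doubling_const_nonneg (hψ_nonneg : ∀ s, 0 ≤ ψ s)
    (hΔ₂ : ∀ s : ℝ, 0 ≤ s → ψ (2 * s) ≤ C * (ψ s + 1)) : 0 ≤ C :=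
  nonneg_of_mul_nonneg_left ((hψ_nonneg _).trans (hΔ₂ 0 le_rfl))
    (by linarith [hψ_nonneg 0])

theorem apply_add_le_of_doubling (hψ_nonneg : ∀ s, 0 ≤ ψ s) (hψ_mono : MonotoneOn ψ (Ici 0))
    (hΔ₂ : ∀ s : ℝ, 0 ≤ s → ψ (2 * s) ≤ C * (ψ s + 1)) {a b : ℝ} (ha : 0 ≤ a) (hb : 0 ≤ b) :
    ψ (a + b) ≤ C * (ψ a + ψ b + 1) := by
  have hmax : 0 ≤ max a b := le_max_of_le_left ha
  have hψ_max : ψ (max a b) ≤ ψ a + ψ b := by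
    rcases le_total b a with h | h
    · rw [max_eq_left h]; linarith [hψ_nonneg b]
    · rw [max_eq_right h]; linarith [hψ_nonneg a]
  calc ψ (a + b) ≤ ψ (2 * max a b) :=
        hψ_mono (add_nonneg ha hb) (mul_nonneg zero_le_two hmax)
          (by linarith [le_max_left a b, le_max_right a b])
    _ ≤ C * (ψ (max a b) + 1) := hΔ₂ _ hmax
    _ ≤ C * (ψ a + ψ b + 1) := by
        have := doubling_const_nonneg hψ_nonneg hΔ₂
        gcongr

variable {E : Type*} [NormedAddCommGroup E] [InnerProductSpace ℝ E]

theorem apply_abs_inner_le_of_abs_inner_sub_le (hψ_nonneg : ∀ s, 0 ≤ ψ s)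
    (hψ_mono : MonotoneOn ψ (Ici 0))
    (hΔ₂ : ∀ s : ℝ, 0 ≤ s → ψ (2 * s) ≤ C * (ψ s + 1)) {u v ξ : E} {M : ℝ}
    (huv : |(inner ℝ (u - v) ξ : ℝ)| ≤ M) :
    ψ |(inner ℝ u ξ : ℝ)| ≤ C * (1 + ψ M) * (ψ |(inner ℝ v ξ : ℝ)| + 1) := by
  have hC := doubling_const_nonneg hψ_nonneg hΔ₂
  set a := |(inner ℝ v ξ : ℝ)|
  set b := |(inner ℝ (u - v) ξ : ℝ)|
  have hsplit : |(inner ℝ u ξ : ℝ)| ≤ a + b := by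
    have := abs_sub_abs_le_abs_sub (inner ℝ u ξ : ℝ) (inner ℝ v ξ)
    rw [← inner_sub_left] at this
    linarith
  have ha : (0 : ℝ) ≤ a := abs_nonneg _
  have hb : (0 : ℝ) ≤ b := abs_nonneg _
  have hψb : ψ b ≤ ψ M := hψ_mono hb (hb.trans huv) huv
  calc ψ |(inner ℝ u ξ : ℝ)| ≤ ψ (a + b) :=
        hψ_mono (mem_Ici.2 (abs_nonneg _)) (add_nonneg ha hb) hsplit
    _ ≤ C * (ψ a + ψ b + 1) := apply_add_le_of_doubling hψ_nonneg hψ_mono hΔ₂ ha hb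
    _ ≤ C * (ψ a + ψ M + 1) := by gcongr
    _ ≤ C * (1 + ψ M) * (ψ a + 1) := by
        nlinarith [mul_nonneg hC (mul_nonneg (hψ_nonneg M) (hψ_nonneg a))]

end Doubling

theorem abs_inner_sub_le_of_holder {X E : Type*} [PseudoMetricSpace X] [NormedAddCommGroup E]
    [InnerProductSpace ℝ E] {υ : X → E} {Cυ γ : ℝ} (hCυ : 0 ≤ Cυ) (hγ : 0 ≤ γ)
    (hHolder : ∀ x y, ‖υ x - υ y‖ ≤ Cυ * dist x y ^ γ) {ε K : ℝ} (hε : 0 < ε) {x y : X}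
    (hxy : dist x y < ε) {ξ : E} (hξ : ‖ξ‖ ≤ K * ε ^ (-γ)) :
    |(inner ℝ (υ x - υ y) ξ : ℝ)| ≤ Cυ * K := by
  have hυ : ‖υ x - υ y‖ ≤ Cυ * ε ^ γ := (hHolder x y).trans (by gcongr)
  calc |(inner ℝ (υ x - υ y) ξ : ℝ)| ≤ ‖υ x - υ y‖ * ‖ξ‖ := abs_real_inner_le_norm _ _
    _ ≤ Cυ * ε ^ γ * (K * ε ^ (-γ)) :=
        mul_le_mul hυ hξ (norm_nonneg _) (by positivity)
    _ = Cυ * K * (ε ^ γ * ε ^ (-γ)) := by ring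
    _ = Cυ * K := by rw [← Real.rpow_add hε, add_neg_cancel, Real.rpow_zero, mul_one]

theorem stmt15_general {N : ℕ}
    (ψ : ℝ → ℝ) (hψ_nonneg : ∀ s, 0 ≤ ψ s)
    (hψ_mono : StrictMonoOn ψ (Ici 0))
    (Cψ : ℝ) (hCψ : 1 ≤ Cψ)
    (hΔ₂ : ∀ s : ℝ, 0 ≤ s → ψ (2 * s) ≤ Cψ * (ψ s + 1))
    (γ : ℝ) (hγ0 : 0 < γ)
    (υ : EuclideanSpace ℝ (Fin N) → EuclideanSpace ℝ (Fin N))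
    (Cυ : ℝ) (hCυ : 0 ≤ Cυ)
    (hHolder : ∀ x y, ‖υ x - υ y‖ ≤ Cυ * dist x y ^ γ) :
    ∀ L : ℝ, 0 < L → ∃ CL > (0:ℝ),
      ∀ ε : ℝ, 0 < ε →
        ∀ x ∈ Metric.ball (0 : EuclideanSpace ℝ (Fin N)) 2,
        ∀ y ∈ Metric.ball (0 : EuclideanSpace ℝ (Fin N)) 2,
          dist x y < ε → ∀ ξ : EuclideanSpace ℝ (Fin N),
            ‖ξ‖ ≤ L ^ (γ / N) * ε ^ (-γ) →
              ψ |(inner ℝ (υ x) ξ : ℝ)| + ‖ξ‖ ^ ((N:ℝ) / γ)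
                ≤ CL * (ψ |(inner ℝ (υ y) ξ : ℝ)| + ‖ξ‖ ^ ((N:ℝ) / γ) + 1) := by
  intro L _
  set CL := Cψ * (1 + ψ (Cυ * L ^ (γ / N)))
  have hCL : 1 ≤ CL :=
    one_le_mul_of_one_le_of_one_le hCψ (le_add_of_nonneg_right (hψ_nonneg _))
  refine ⟨CL, by linarith, fun ε hε x _ y _ hxy ξ hξ => ?_⟩
  have hψ := apply_abs_inner_le_of_abs_inner_sub_le hψ_nonneg hψ_mono.monotoneOn hΔ₂
    (abs_inner_sub_le_of_holder hCυ hγ0.le hHolder hε hxy hξ)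
  have hξ_pow := le_mul_of_one_le_left (Real.rpow_nonneg (norm_nonneg ξ) ((N:ℝ) / γ)) hCL
  linarith

/-- Let `ψ` be increasing convex with the `Δ₂` condition
`ψ(2s) ≤ C_ψ(ψ(s)+1)`, and `υ : ℝ^N → ℝ^N` be `γ`-Hölder with constant `C_υ`,
`γ ∈ (0,1]`. Then `f(x,ξ) = ψ(|⟨υ(x),ξ⟩|) + |ξ|^{N/γ}` on `B(0,2) × ℝ^N` satisfies:
for every `L > 0` there is `C_L > 0` such that if `|x−y| < ε` and
`|ξ| ≤ L^{γ/N} ε^{−γ}`, then `f(x,ξ) ≤ C_L (f(y,ξ) + 1)`. -/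
theorem stmt15 {N : ℕ} (hN : 0 < N)
    (ψ : ℝ → ℝ) (hψ_nonneg : ∀ s, 0 ≤ ψ s)
    (hψ_mono : StrictMonoOn ψ (Ici 0)) (hψ_conv : ConvexOn ℝ (Ici 0) ψ)
    (Cψ : ℝ) (hCψ : 1 ≤ Cψ)
    (hΔ₂ : ∀ s : ℝ, 0 ≤ s → ψ (2 * s) ≤ Cψ * (ψ s + 1))
    (γ : ℝ) (hγ0 : 0 < γ) (hγ1 : γ ≤ 1)
    (υ : EuclideanSpace ℝ (Fin N) → EuclideanSpace ℝ (Fin N))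
    (Cυ : ℝ) (hCυ : 0 ≤ Cυ)
    (hHolder : ∀ x y, ‖υ x - υ y‖ ≤ Cυ * dist x y ^ γ) :
    ∀ L : ℝ, 0 < L → ∃ CL > (0:ℝ),
      ∀ ε : ℝ, 0 < ε →
        ∀ x ∈ Metric.ball (0 : EuclideanSpace ℝ (Fin N)) 2,
        ∀ y ∈ Metric.ball (0 : EuclideanSpace ℝ (Fin N)) 2,
          dist x y < ε → ∀ ξ : EuclideanSpace ℝ (Fin N),
            ‖ξ‖ ≤ L ^ (γ / N) * ε ^ (-γ) →
              ψ |(inner ℝ (υ x) ξ : ℝ)| + ‖ξ‖ ^ ((N:ℝ) / γ)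
                ≤ CL * (ψ |(inner ℝ (υ y) ξ : ℝ)| + ‖ξ‖ ^ ((N:ℝ) / γ) + 1) :=
  stmt15_general ψ hψ_nonneg hψ_mono Cψ hCψ hΔ₂ γ hγ0 υ Cυ hCυ hHolder
end

section
/- Define f : (0,1) × ℝ × ℝ → [0,∞) by f(x,t,ξ) := (t³ − x)²ξ⁶ (Manià's integrand). Then f does not satisfy the balance condition: there exist sequences ε_n → 0 such that f(1−ε_n, 1, ε_n^{−1}) = ε_n^{−4} → ∞ while inf_{x ∈ (1−ε_n, 1)} f(x, 1, ε_n^{−1}) = 0. In particular, there is no constant C such that f(x,t,ξ) ≤ C(inf_{y ∈ B(x,ε)∩(0,1)} f(y,t,ξ) + 1) for all x, t ∈ [−1,1], |ξ| ≤ ε^{−1} and all ε > 0. -/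
open Set Filter

/-- Manià's integrand `f(x,t,ξ) = (t³ − x)² ξ⁶`. -/
noncomputable def mania (x t ξ : ℝ) : ℝ := (t ^ 3 - x) ^ 2 * ξ ^ 6

lemma mania_nonneg (x t ξ : ℝ) : 0 ≤ mania x t ξ := by
  unfold mania; positivity

lemma inf_zero {S : Set ℝ} {a : ℝ} (ha : a < 1) (b : ℝ) (hS : Ioo a 1 ⊆ S) :
    sInf ((fun y : ℝ => mania y 1 b) '' S) = 0 := by
  have hne : S.Nonempty := ⟨(a + 1) / 2, hS ⟨by linarith, by linarith⟩⟩
  have hbdd : BddBelow ((fun y : ℝ => mania y 1 b) '' S) := by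
    refine ⟨0, ?_⟩
    rintro z ⟨y, -, rfl⟩
    exact mania_nonneg _ _ _
  refine le_antisymm ?_ (le_csInf (hne.image _) ?_)
  · rw [Real.sInf_le_iff hbdd (hne.image _)]
    intro δ hδ
    have hb1 : (0:ℝ) < b ^ 6 + 1 := by positivity
    set t : ℝ := Real.sqrt (δ / (b ^ 6 + 1)) with ht
    have ht0 : 0 < t := Real.sqrt_pos.2 (by positivity)
    have ht2 : t ^ 2 = δ / (b ^ 6 + 1) := Real.sq_sqrt (by positivity)
    set y : ℝ := max ((a + 1) / 2) (1 - t) with hy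
    have hyt : 1 - t ≤ y := le_max_right _ _
    have hym : (a + 1) / 2 ≤ y := le_max_left _ _
    have hy1 : y < 1 := max_lt (by linarith) (by linarith)
    have hya : a < y := by linarith
    refine ⟨mania y 1 b, ⟨y, hS ⟨hya, hy1⟩, rfl⟩, ?_⟩
    have h1y : 1 - y ≤ t := by linarith
    have h1y' : 0 ≤ 1 - y := by linarith
    have hsq : (1 - y) ^ 2 ≤ t ^ 2 := by nlinarith
    have hval : mania y 1 b ≤ t ^ 2 * b ^ 6 := by
      unfold mania
      have h13 : ((1:ℝ) ^ 3 - y) = 1 - y := by ring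
      rw [h13]
      have hb6 : (0:ℝ) ≤ b ^ 6 := by positivity
      nlinarith
    have hlt : t ^ 2 * b ^ 6 < δ := by
      rw [ht2, div_mul_eq_mul_div, div_lt_iff₀ hb1]
      nlinarith
    linarith
  · rintro z ⟨y, -, rfl⟩
    exact mania_nonneg _ _ _

/-- Manià's integrand fails the balance (anti-jump) condition:
`f(1−ε, 1, ε⁻¹) = ε⁻⁴` while `inf_{y ∈ (1−ε,1)} f(y,1,ε⁻¹) = 0`; in particular there is
no constant `C` with `f(x,t,ξ) ≤ C (inf_{y ∈ B(x,ε)∩(0,1)} f(y,t,ξ) + 1)` for all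
`x ∈ (0,1)`, `t ∈ [−1,1]`, `|ξ| ≤ ε⁻¹`, `ε > 0`. -/
theorem stmt16 :
    (∀ ε ∈ Ioo (0:ℝ) 1,
      mania (1 - ε) 1 ε⁻¹ = ε ^ (-(4:ℝ)) ∧
      sInf ((fun y : ℝ => mania y 1 ε⁻¹) '' Ioo (1 - ε) 1) = 0) ∧
    ¬ ∃ C : ℝ, ∀ x ∈ Ioo (0:ℝ) 1, ∀ t ∈ Icc (-1:ℝ) 1, ∀ ξ : ℝ, ∀ ε > (0:ℝ),
        |ξ| ≤ ε⁻¹ →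
        mania x t ξ
          ≤ C * (sInf ((fun y => mania y t ξ) '' (Metric.ball x ε ∩ Ioo 0 1)) + 1) := by
  constructor
  · rintro ε ⟨hε0, hε1⟩
    refine ⟨?_, inf_zero (by linarith) _ (subset_refl _)⟩
    unfold mania
    rw [show (-(4:ℝ)) = ((-4 : ℤ) : ℝ) by norm_num, Real.rpow_intCast]
    rw [zpow_neg, show ((4:ℤ) = ((4:ℕ):ℤ)) by norm_num, zpow_natCast]
    field_simp
    ring
  · rintro ⟨C, hC⟩
    have hC1 : (0:ℝ) < |C| + 1 := by positivity
    set ε : ℝ := min (1/2) (1 / (|C| + 1)) with hε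
    have hε0 : 0 < ε := lt_min (by norm_num) (by positivity)
    have hεhalf : ε ≤ 1/2 := min_le_left _ _
    have hε1 : ε < 1 := by linarith
    have hx : (1 - ε) ∈ Ioo (0:ℝ) 1 := ⟨by linarith, by linarith⟩
    have key := hC (1 - ε) hx 1 ⟨by norm_num, le_refl 1⟩ ε⁻¹ ε hε0
      (by rw [abs_of_pos (by positivity)])
    have hsub : Ioo (1 - ε) 1 ⊆ Metric.ball (1 - ε) ε ∩ Ioo 0 1 := by
      rintro y ⟨hy1, hy2⟩
      refine ⟨?_, by linarith, hy2⟩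
      rw [Metric.mem_ball, Real.dist_eq, abs_lt]
      constructor <;> linarith
    rw [inf_zero (by linarith) _ hsub] at key
    have hval : mania (1 - ε) 1 ε⁻¹ = (ε ^ 4)⁻¹ := by
      unfold mania
      field_simp
      ring
    rw [hval] at key
    simp only [zero_add, mul_one] at key
    have h4 : (0:ℝ) < ε ^ 4 := by positivity
    have h1 : 1 ≤ C * ε ^ 4 := by
      have := mul_le_mul_of_nonneg_right key h4.le
      rwa [inv_mul_cancel₀ (ne_of_gt h4)] at this
    have hεmul : ε * (|C| + 1) ≤ 1 := (le_div_iff₀ hC1).mp (min_le_right _ _)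
    nlinarith [le_abs_self C, abs_nonneg C, sq_nonneg ε, sq_nonneg (ε ^ 2),
      pow_le_of_le_one hε0.le hε1.le (by norm_num : (4:ℕ) ≠ 0)]
end

section
/- Define f : ℝ × ℝ × ℝ → [0,∞) by f(x,t,ξ) := (x⁴ − t⁶)²|ξ|^{27} + v|ξ|² with a fixed v > 0 (Ball–Mizel's integrand). Then f fails the anti-jump condition: for ε ∈ (0,1), f⁻_{B(0,ε)}(0, ε^{−1/2}) = v·ε^{−1} (infimum over x ∈ (−ε,ε) of (x⁴)²ε^{−27/2} + vε^{−1} equals vε^{−1}), while f(ε, 0, ε^{−1/2}) = ε^{−11/2} + vε^{−1}, and the ratio f(ε,0,ε^{−1/2})/f⁻_{B(0,ε)}(0,ε^{−1/2}) = ε^{−9/2}/v + 1 tends to +∞ as ε → 0. -/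
open Set Filter

/-- The Ball–Mizel integrand `f(x,t,ξ) = (x⁴ − t⁶)² |ξ|²⁷ + v ξ²`. -/
noncomputable def ballMizel (v x t ξ : ℝ) : ℝ :=
  (x ^ 4 - t ^ 6) ^ 2 * |ξ| ^ (27 : ℕ) + v * ξ ^ 2

lemma hxi2 {ε : ℝ} (hε : 0 < ε) : (ε ^ (-(1/2 : ℝ))) ^ 2 = ε⁻¹ := by
  rw [← Real.rpow_natCast (ε ^ (-(1/2:ℝ))) 2, ← Real.rpow_mul hε.le]
  norm_num [Real.rpow_neg_one]

lemma bmval (v : ℝ) {ε : ℝ} (hε : 0 < ε) :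
    ballMizel v ε 0 (ε ^ (-(1/2 : ℝ))) = ε ^ (-(11/2 : ℝ)) + v * ε⁻¹ := by
  have hpos : 0 < ε ^ (-(1/2:ℝ)) := Real.rpow_pos_of_pos hε _
  simp only [ballMizel, abs_of_pos hpos]
  rw [← Real.rpow_natCast (ε ^ (-(1/2:ℝ))) 27, ← Real.rpow_mul hε.le, hxi2 hε]
  have h8 : (ε^4 - 0^6)^2 = ε ^ (8:ℝ) := by
    rw [show (8:ℝ) = ((8:ℕ):ℝ) by norm_num, Real.rpow_natCast]; ring
  rw [h8, ← Real.rpow_add hε]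
  norm_num


/-- The Ball–Mizel integrand fails the anti-jump condition: for
`ε ∈ (0,1)` one has `inf_{|y|<ε} f(y, 0, ε^{−1/2}) = v ε⁻¹` while
`f(ε, 0, ε^{−1/2}) = ε^{−11/2} + v ε⁻¹`, and the ratio tends to `+∞` as `ε → 0⁺`. -/
theorem stmt17 (v : ℝ) (hv : 0 < v) :
    (∀ ε ∈ Ioo (0:ℝ) 1,
      sInf ((fun y : ℝ => ballMizel v y 0 (ε ^ (-(1/2 : ℝ)))) '' Metric.ball (0:ℝ) ε)
          = v * ε⁻¹ ∧
      ballMizel v ε 0 (ε ^ (-(1/2 : ℝ))) = ε ^ (-(11/2 : ℝ)) + v * ε⁻¹) ∧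
    Tendsto (fun ε : ℝ => ballMizel v ε 0 (ε ^ (-(1/2 : ℝ))) / (v * ε⁻¹))
      (nhdsWithin 0 (Ioi 0)) atTop := by
  constructor
  · rintro ε ⟨hε0, hε1⟩
    refine ⟨?_, bmval v hε0⟩
    have hleast : IsLeast ((fun y : ℝ => ballMizel v y 0 (ε ^ (-(1/2 : ℝ)))) '' Metric.ball (0:ℝ) ε) (v * ε⁻¹) := by
      constructor
      · refine ⟨0, by simpa using hε0, ?_⟩
        show ballMizel v 0 0 _ = v * ε⁻¹
        rw [show ballMizel v 0 0 (ε ^ (-(1/2:ℝ))) = (0^4-0^6)^2 * |ε ^ (-(1/2:ℝ))| ^ (27:ℕ) + v * (ε ^ (-(1/2:ℝ)))^2 from rfl, hxi2 hε0]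
        norm_num
      · rintro x ⟨y, hy, rfl⟩
        simp only [ballMizel]
        rw [← hxi2 hε0]
        have h1 : 0 ≤ (y ^ 4 - 0 ^ 6) ^ 2 * |ε ^ (-(1/2:ℝ))| ^ (27:ℕ) :=
          mul_nonneg (sq_nonneg _) (pow_nonneg (abs_nonneg _) _)
        linarith
    exact hleast.csInf_eq
  · have heq : ∀ ε ∈ Ioi (0:ℝ),
        ε ^ (-(9/2:ℝ)) / v + 1 = ballMizel v ε 0 (ε ^ (-(1/2 : ℝ))) / (v * ε⁻¹) := by
      intro ε hε
      have hne : v * ε⁻¹ ≠ 0 := mul_ne_zero hv.ne' (inv_ne_zero (ne_of_gt hε))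
      have h11 : ε ^ (-(11/2:ℝ)) = ε ^ (-(9/2:ℝ)) * ε⁻¹ := by
        rw [← Real.rpow_neg_one ε, ← Real.rpow_add hε]; norm_num
      rw [bmval v hε, h11, add_div, div_self hne,
        mul_div_mul_right _ _ (inv_ne_zero (ne_of_gt hε))]
    refine Tendsto.congr' (eventuallyEq_of_mem self_mem_nhdsWithin heq) ?_
    apply tendsto_atTop_add_const_right
    apply Tendsto.atTop_div_const hv
    have : Tendsto (fun ε : ℝ => (ε⁻¹) ^ ((9:ℝ)/2)) (nhdsWithin 0 (Ioi 0)) atTop :=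
      (tendsto_rpow_atTop (by norm_num)).comp tendsto_inv_nhdsGT_zero
    refine this.congr' (eventuallyEq_of_mem self_mem_nhdsWithin fun ε hε => ?_)
    rw [← Real.rpow_neg_one ε, ← Real.rpow_mul (le_of_lt hε)]
    norm_num
end
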